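/- Fix α > 2 and c > 0, and define f on (0,1) by f(s) = (1 + c²)·arctan(c) + ((1+s)²/(1−s)² + c²)·arctan(c·(1−s)/(1+s)) − 2c/(1−s) − π·c²/α. Then f has at most one zero in (0,1); moreover, if f has a zero in (0,1), then its limit at 0 is strictly positive, i.e., 2·(1 + c²)·arctan(c) − 2c − π·c²/α > 0. -/

import Mathlib

open Real

noncomputable section

/-- The function `f` of Lemma 8, with parameters `α` and `c`. -/
def fval (α c s : ℝ) : ℝ :=
  (1 + c ^ 2) * Real.arctan c
    + ((1 + s) ^ 2 / (1 - s) ^ 2 + c ^ 2) * Real.arctan (c * (1 - s) / (1 + s))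
    - 2 * c / (1 - s) - π * c ^ 2 / α

/-!
On `(-1, 1)` the derivative of `f` is
`4 (1 + s) / (1 - s)³ · (arctan X - X)` with `X = c (1 - s) / (1 + s) > 0`, which is negative
because `arctan X < X`. So `f` is strictly decreasing on `(-1, 1)`: it vanishes at most once
on `(0, 1)`, and if it vanishes at some `s > 0` then `f 0 > f s = 0`, and `f 0` is the
stated expression.
-/

theorem Real.arctan_lt_self {x : ℝ} (hx : 0 < x) : arctan x < x := by
  simpa only [tan_arctan] using lt_tan (arctan_pos.mpr hx) (arctan_lt_pi_div_two x)

lemma hasDerivAt_fval (α c : ℝ) {s : ℝ} (hsp : 1 + s ≠ 0) (hsm : 1 - s ≠ 0) :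
    HasDerivAt (fval α c)
      (4 * (1 + s) / (1 - s) ^ 3 *
        (arctan (c * (1 - s) / (1 + s)) - c * (1 - s) / (1 + s))) s := by
  have hplus : HasDerivAt (fun s : ℝ => 1 + s) 1 s := (hasDerivAt_id s).const_add 1
  have hminus : HasDerivAt (fun s : ℝ => 1 - s) (-1) s := (hasDerivAt_id s).const_sub 1
  have hratio := (hplus.pow 2).div (hminus.pow 2) (pow_ne_zero 2 hsm)
  have harctan := ((hminus.const_mul c).div hplus hsp).arctan
  have hsum := (((hratio.add_const (c ^ 2)).mul harctan).const_add
    ((1 + c ^ 2) * arctan c)).sub ((hminus.inv hsm).const_mul (2 * c))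
  refine (hsum.sub_const (π * c ^ 2 / α)).congr_deriv ?_
  simp only [Pi.div_apply, Pi.pow_apply]
  field_simp
  ring

lemma fval_strictAntiOn (α : ℝ) {c : ℝ} (hc : 0 < c) :
    StrictAntiOn (fval α c) (Set.Ioo (-1) 1) := by
  refine strictAntiOn_of_deriv_neg (convex_Ioo (-1) 1) ?_ ?_
  · intro s ⟨hs₁, hs₂⟩
    exact (hasDerivAt_fval α c (by linarith) (by linarith)).continuousAt.continuousWithinAt
  · intro s hs
    rw [interior_Ioo] at hs
    obtain ⟨hs₁, hs₂⟩ := hs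
    have hsp : 0 < 1 + s := by linarith
    have hsm : 0 < 1 - s := by linarith
    rw [(hasDerivAt_fval α c hsp.ne' hsm.ne').deriv]
    exact mul_neg_of_pos_of_neg (by positivity) (sub_neg.mpr (arctan_lt_self (by positivity)))

lemma fval_zero (α c : ℝ) :
    fval α c 0 = 2 * (1 + c ^ 2) * arctan c - 2 * c - π * c ^ 2 / α := by
  simp only [fval, add_zero, sub_zero, mul_one, div_one, one_pow]
  ring

theorem stmt15_general (α c : ℝ) (hc : 0 < c) :
    (∀ s₁ ∈ Set.Ioo (0 : ℝ) 1, ∀ s₂ ∈ Set.Ioo (0 : ℝ) 1,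
      fval α c s₁ = 0 → fval α c s₂ = 0 → s₁ = s₂) ∧
    ((∃ s ∈ Set.Ioo (0 : ℝ) 1, fval α c s = 0) →
      0 < 2 * (1 + c ^ 2) * Real.arctan c - 2 * c - π * c ^ 2 / α) := by
  have hanti := fval_strictAntiOn α hc
  have hsub : Set.Ioo (0 : ℝ) 1 ⊆ Set.Ioo (-1) 1 := Set.Ioo_subset_Ioo_left (by norm_num)
  refine ⟨fun s₁ hs₁ s₂ hs₂ h₁ h₂ => hanti.injOn (hsub hs₁) (hsub hs₂) (h₁.trans h₂.symm), ?_⟩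
  rintro ⟨s, hs, hfs⟩
  have hdecrease : fval α c s < fval α c 0 := hanti (by norm_num) (hsub hs) hs.1
  rwa [hfs, fval_zero] at hdecrease

/-- **Lemma.** For `α > 2` and `c > 0`, the function `f` has at most one zero in `(0,1)`;
and if it has a zero there, then its limit at `0`, namely
`2(1+c²) arctan c - 2c - π c²/α`, is strictly positive. -/
theorem stmt15 (α c : ℝ) (hα : 2 < α) (hc : 0 < c) :
    (∀ s₁ ∈ Set.Ioo (0 : ℝ) 1, ∀ s₂ ∈ Set.Ioo (0 : ℝ) 1,
      fval α c s₁ = 0 → fval α c s₂ = 0 → s₁ = s₂) ∧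
    ((∃ s ∈ Set.Ioo (0 : ℝ) 1, fval α c s = 0) →
      0 < 2 * (1 + c ^ 2) * Real.arctan c - 2 * c - π * c ^ 2 / α) :=
  stmt15_general α c hc
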